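/- Let q ≥ 2 and let T be a subgroup of S_q, with C(T) = {α(t) : t ∈ T} the permutation code generated by T in H(q,q). Then C(T) is diagonally neighbour transitive in H(q,q) if and only if the normaliser N_{S_q}(T) acts 2-transitively on {1,…,q}. Moreover, for every positive integer p, if C(T) is diagonally neighbour transitive then the p-fold repetition code Rep_p(C(T)) is a diagonally neighbour transitive frequency permutation array in H(pq,q). -/

import Mathlib

open Equiv Pointwise

section HammingDefs

variable {I : Type*} [Fintype I] [DecidableEq I] {q : ℕ}

/-- The permutation of the vertex set of the Hamming graph `H(I,q)` induced by the
letter permutations `g i` (acting coordinatewise) followed by the coordinate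
permutation `σ`:  `(α^x)_i = g_{σ⁻¹ i} (α_{σ⁻¹ i})`. -/
def tvp (g : I → Equiv.Perm (Fin q)) (σ : Equiv.Perm I) : Equiv.Perm (I → Fin q) where
  toFun α i := g (σ⁻¹ i) (α (σ⁻¹ i))
  invFun β i := (g i)⁻¹ (β (σ i))
  left_inv α := by funext i; simp
  right_inv β := by funext i; simp

/-- The automorphism group of the Hamming graph `H(I,q)`: all permutations of the
vertex set preserving adjacency (Hamming distance 1). -/
def autH (I : Type*) [Fintype I] [DecidableEq I] (q : ℕ) :
    Subgroup (Equiv.Perm (I → Fin q)) where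
  carrier := {y | ∀ α β : I → Fin q, hammingDist (y α) (y β) = 1 ↔ hammingDist α β = 1}
  one_mem' := by intro α β; simp
  mul_mem' := by
    intro a b ha hb α β
    rw [Equiv.Perm.mul_apply, Equiv.Perm.mul_apply, ha, hb]
  inv_mem' := by
    intro a ha α β
    simpa using (ha (a⁻¹ α) (a⁻¹ β)).symm

/-- The homomorphism `S_q × S_I → Sym(V(H(I,q)))` whose image is `Diag(S_q) ⋊ L`. -/
def diagLHom (I : Type*) [Fintype I] [DecidableEq I] (q : ℕ) :
    Equiv.Perm (Fin q) × Equiv.Perm I →* Equiv.Perm (I → Fin q) where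
  toFun x := tvp (fun _ => x.1) x.2
  map_one' := by
    ext α i
    simp [tvp]
  map_mul' x y := by
    ext α i
    simp [tvp, mul_inv_rev]

/-- The subgroup `Diag_I(S_q) ⋊ L` of the automorphism group of `H(I,q)`. -/
def diagL (I : Type*) [Fintype I] [DecidableEq I] (q : ℕ) :
    Subgroup (Equiv.Perm (I → Fin q)) :=
  (diagLHom I q).range

/-- The subgroup `L` of pure coordinate permutations of `H(I,q)`. -/
def permL (I : Type*) [Fintype I] [DecidableEq I] (q : ℕ) :
    Subgroup (Equiv.Perm (I → Fin q)) :=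
  ((diagLHom I q).comp (MonoidHom.inr (Equiv.Perm (Fin q)) (Equiv.Perm I))).range

/-- Distance from a vertex to a code. -/
noncomputable def distC (γ : I → Fin q) (C : Set (I → Fin q)) : ℕ :=
  sInf {d | ∃ β ∈ C, hammingDist γ β = d}

/-- The cell `C_i` of the distance partition of the code `C`. -/
def cell (C : Set (I → Fin q)) (i : ℕ) : Set (I → Fin q) :=
  {γ | distC γ C = i}

/-- The covering radius of the code `C`. -/
noncomputable def covRad (C : Set (I → Fin q)) : ℕ :=
  sSup {d | ∃ γ : I → Fin q, distC γ C = d}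

/-- The minimum distance of the code `C`. -/
noncomputable def minDist (C : Set (I → Fin q)) : ℕ :=
  sInf {d | ∃ β ∈ C, ∃ γ ∈ C, β ≠ γ ∧ hammingDist β γ = d}

/-- `S` is an orbit of the subgroup `X` of permutations of the vertex set. -/
def IsOrbitOf (X : Subgroup (Equiv.Perm (I → Fin q))) (S : Set (I → Fin q)) : Prop :=
  ∃ v, S = {w | ∃ x ∈ X, x v = w}

/-- `C` is `X`-neighbour transitive: `X` is a group of automorphisms of the Hamming
graph, and both `C` and its set of neighbours `C_1` are `X`-orbits. -/
def NbrTransitive (X : Subgroup (Equiv.Perm (I → Fin q))) (C : Set (I → Fin q)) : Prop :=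
  X ≤ autH I q ∧ IsOrbitOf X C ∧ IsOrbitOf X (cell C 1)

/-- `C` is `X`-completely transitive: every cell of the distance partition is an `X`-orbit. -/
def ComplTransitive (X : Subgroup (Equiv.Perm (I → Fin q))) (C : Set (I → Fin q)) : Prop :=
  X ≤ autH I q ∧ ∀ i ≤ covRad C, IsOrbitOf X (cell C i)

/-- `C` is diagonally `X`-neighbour transitive. -/
def DiagNbrTransitive (X : Subgroup (Equiv.Perm (I → Fin q))) (C : Set (I → Fin q)) : Prop :=
  NbrTransitive X C ∧ X ≤ diagL I q

/-- The automorphism group of the code `C`: the setwise stabiliser of `C` in the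
automorphism group of the Hamming graph. -/
def autCode (C : Set (I → Fin q)) : Subgroup (Equiv.Perm (I → Fin q)) :=
  autH I q ⊓ MulAction.stabilizer (Equiv.Perm (I → Fin q)) C

/-- Number of occurrences of the letter `a` in the vertex `α`. -/
def cnt (α : I → Fin q) (a : Fin q) : ℕ :=
  (Finset.univ.filter fun i => α i = a).card

/-- The composition `Q(α)` of a vertex: the set of pairs `(a, p)` such that the letter `a`
occurs exactly `p > 0` times in `α`. -/
def compOf (α : I → Fin q) : Set (Fin q × ℕ) :=
  {x | 0 < x.2 ∧ cnt α x.1 = x.2}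

/-- `Num(α)`: the set of pairs `(p, s)` such that exactly `s > 0` distinct letters occur
exactly `p > 0` times in `α`. -/
def numOf (α : I → Fin q) : Set (ℕ × ℕ) :=
  {x | 0 < x.1 ∧ 0 < x.2 ∧ (Finset.univ.filter fun a => cnt α a = x.1).card = x.2}

/-- The repetition code `Rep(I,q)`. -/
def repCode (I : Type*) [Fintype I] [DecidableEq I] (q : ℕ) : Set (I → Fin q) :=
  {α | ∃ a, α = fun _ => a}

/-- The injection code `Inj(I,q)`: all tuples with pairwise distinct entries. -/
def injCode (I : Type*) [Fintype I] [DecidableEq I] (q : ℕ) : Set (I → Fin q) :=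
  {α | Function.Injective α}

/-- The code `All(pq,q)`: all vertices in which every letter occurs exactly `p` times. -/
def allCode (I : Type*) [Fintype I] [DecidableEq I] (q p : ℕ) : Set (I → Fin q) :=
  {α | ∀ a, cnt α a = p}

/-- `C` is `s`-regular. -/
def RegularUpTo (C : Set (I → Fin q)) (s : ℕ) : Prop :=
  ∀ i ≤ s, ∀ γ ∈ cell C i, ∀ γ' ∈ cell C i, ∀ k : ℕ,
    {β ∈ C | hammingDist γ β = k}.ncard = {β ∈ C | hammingDist γ' β = k}.ncard

/-- `C` is completely regular. -/
def ComplRegular (C : Set (I → Fin q)) : Prop :=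
  RegularUpTo C (covRad C)

/-- `C` is a constant composition code: every letter occurs the same positive number of
times in every codeword. -/
def IsCCC (C : Set (I → Fin q)) : Prop :=
  C.Nonempty ∧ ∃ f : Fin q → ℕ, (∀ a, 0 < f a) ∧ ∀ β ∈ C, ∀ a, cnt β a = f a

end HammingDefs

section Weight

/-- The weight of a binary vertex: number of nonzero entries. -/
def wt {m : ℕ} (α : Fin m → Fin 2) : ℕ :=
  (Finset.univ.filter fun i => α i ≠ 0).card

/-- The code `W([m/2],2)`: binary `m`-tuples of weight `(m+1)/2` or `(m-1)/2`. -/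
def wCode (m : ℕ) : Set (Fin m → Fin 2) :=
  {α | wt α = (m+1)/2 ∨ wt α = (m-1)/2}

/-- The code `W([m/2],2)` over a general alphabet (used when `q = 2`): vertices in which
one letter occurs `(m+1)/2` times and another `(m-1)/2` times. -/
def wCodeGen (m q : ℕ) : Set (Fin m → Fin q) :=
  {α | ∃ a b : Fin q, a ≠ b ∧ cnt α a = (m+1)/2 ∧ cnt α b = (m-1)/2}

end Weight

section PermCodes

/-- The vertex `α(g) = (1^g, …, q^g)` of `H(q,q)` associated with a permutation `g`. -/
def alphaVtx {q : ℕ} (g : Equiv.Perm (Fin q)) : Fin q → Fin q := fun i => g i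

/-- The permutation code generated by a set `T` of permutations. -/
def permCode {q : ℕ} (T : Set (Equiv.Perm (Fin q))) : Set (Fin q → Fin q) :=
  alphaVtx '' T

end PermCodes

section Repetition

variable {I : Type*} [Fintype I] [DecidableEq I] {q : ℕ}

/-- The `p`-fold repetition `rep_p(α) = (α,…,α)`, a vertex of `H(p·|I|, q)`. -/
def repv (p : ℕ) (α : I → Fin q) : Fin p × I → Fin q := fun ji => α ji.2

/-- The `p`-fold repetition code `Rep_p(C)`. -/
def repCodeP (p : ℕ) (C : Set (I → Fin q)) : Set (Fin p × I → Fin q) :=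
  repv p '' C

/-- The homomorphism `Sym(V(H(I,q))) × S_p → Sym(V(H(p·|I|,q)))`: the pair `(x,σ)` acts on
`p`-tuples of vertices by `(α_1,…,α_p) ↦ (α_{σ⁻¹(1)}^x, …, α_{σ⁻¹(p)}^x)`. -/
def repHom (p : ℕ) (I : Type*) [Fintype I] [DecidableEq I] (q : ℕ) :
    Equiv.Perm (I → Fin q) × Equiv.Perm (Fin p) →* Equiv.Perm (Fin p × I → Fin q) where
  toFun x :=
    { toFun := fun β ji => x.1 (fun i => β (x.2⁻¹ ji.1, i)) ji.2
      invFun := fun β ji => x.1⁻¹ (fun i => β (x.2 ji.1, i)) ji.2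
      left_inv := by intro β; funext ji; simp
      right_inv := by intro β; funext ji; simp }
  map_one' := by ext β ji; simp
  map_mul' x y := by ext β ji; simp [mul_inv_rev]

end Repetition

/-!
A diagonal automorphism `(h, σ)` maps the codeword `α(t)` to `α(h t σ⁻¹)`, so it preserves
`C(T)` exactly when `h T σ⁻¹ = T`, i.e. when `h` normalises `T` and `h σ⁻¹ ∈ T`. Two distinct
permutations differ in at least two positions, so the neighbours of `C(T)` are the vertices
obtained from a codeword by changing one entry, and those of `α(1)` are the tuples
`update α(1) i k` with `k ≠ i`: the identity with the letter `i` replaced by `k`, so `k` occurs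
twice and `i` is missing. A diagonal element mapping one such tuple to another sends the repeated
letter to the repeated letter and the missing letter to the missing letter; hence
neighbour transitivity gives a normalising `h` with any prescribed action on an ordered pair.
Conversely, if `N(T)` is 2-transitive then the elements `(y, y)`, `y ∈ N(T)`, fix `α(1)` and act
transitively on its neighbours, which makes `C(T)` and `C(T)₁` orbits. The same stabiliser,
combined with permutations of the `p` copies, works for `Rep_p(C(T))`.
-/

section Orbits

variable {I : Type*} {q : ℕ}

theorem IsOrbitOf.apply_mem {X : Subgroup (Perm (I → Fin q))} {S : Set (I → Fin q)}
    (hS : IsOrbitOf X S) {x : Perm (I → Fin q)} (hx : x ∈ X) {v : I → Fin q} (hv : v ∈ S) :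
    x v ∈ S := by
  obtain ⟨v₀, rfl⟩ := hS
  obtain ⟨y, hy, rfl⟩ := hv
  exact ⟨x * y, mul_mem hx hy, rfl⟩

theorem IsOrbitOf.exists_apply_eq {X : Subgroup (Perm (I → Fin q))} {S : Set (I → Fin q)}
    (hS : IsOrbitOf X S) {v w : I → Fin q} (hv : v ∈ S) (hw : w ∈ S) :
    ∃ x ∈ X, x v = w := by
  obtain ⟨v₀, rfl⟩ := hS
  obtain ⟨y, hy, rfl⟩ := hv
  obtain ⟨z, hz, rfl⟩ := hw
  exact ⟨z * y⁻¹, mul_mem hz (inv_mem hy), by simp⟩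

theorem mem_cell_one_iff [Fintype I] {C : Set (I → Fin q)}
    (hC : ∀ β ∈ C, ∀ β' ∈ C, hammingDist β β' ≠ 1) {γ : I → Fin q} :
    γ ∈ cell C 1 ↔ ∃ β ∈ C, hammingDist γ β = 1 := by
  change sInf _ = 1 ↔ _
  constructor
  · intro h
    have hne : {d | ∃ β ∈ C, hammingDist γ β = d}.Nonempty :=
      Set.nonempty_iff_ne_empty.2 fun he => by simp [he] at h
    exact h ▸ Nat.sInf_mem hne
  · rintro ⟨β, hβ, h1⟩
    have hpos : ∀ d ∈ {d | ∃ β ∈ C, hammingDist γ β = d}, d ≠ 0 := by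
      rintro _ ⟨β', hβ', hd⟩ rfl
      exact hC γ (eq_of_hammingDist_eq_zero hd ▸ hβ') β hβ h1
    have hle : sInf {d | ∃ β ∈ C, hammingDist γ β = d} ≤ 1 := Nat.sInf_le ⟨β, hβ, h1⟩
    have := hpos _ (Nat.sInf_mem ⟨1, β, hβ, h1⟩)
    omega

end Orbits

section Hamming

variable {I : Type*} [Fintype I] [DecidableEq I] {q : ℕ}

theorem diagLHom_apply (x : Perm (Fin q) × Perm I) (α : I → Fin q) (i : I) :
    diagLHom I q x α i = x.1 (α (x.2⁻¹ i)) :=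
  rfl

theorem hammingDist_diagLHom (x : Perm (Fin q) × Perm I) (α β : I → Fin q) :
    hammingDist (diagLHom I q x α) (diagLHom I q x β) = hammingDist α β := by
  refine Finset.card_bij' (fun i _ => x.2⁻¹ i) (fun i _ => x.2 i) ?_ ?_ (by simp) (by simp) <;>
    simp [diagLHom_apply]

theorem diagL_le_autH : diagL I q ≤ autH I q := by
  rintro _ ⟨x, rfl⟩ α β
  rw [hammingDist_diagLHom]

theorem diagLHom_update (x : Perm (Fin q) × Perm I) (β : I → Fin q) (i : I) (k : Fin q) :
    diagLHom I q x (Function.update β i k) =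
      Function.update (diagLHom I q x β) (x.2 i) (x.1 k) := by
  ext j
  rcases eq_or_ne j (x.2 i) with rfl | hj
  · simp [diagLHom_apply]
  · rw [diagLHom_apply, Function.update_of_ne hj, Function.update_of_ne, diagLHom_apply]
    exact fun h => hj (by simp [← h])

theorem hammingDist_update_self {β : I → Fin q} {i : I} {k : Fin q} (hk : k ≠ β i) :
    hammingDist (Function.update β i k) β = 1 := by
  rw [hammingDist, Finset.card_eq_one]
  refine ⟨i, Finset.ext fun j => ?_⟩
  rcases eq_or_ne j i with rfl | hj <;> simp [*]

theorem hammingDist_eq_one_iff {γ β : I → Fin q} :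
    hammingDist γ β = 1 ↔ ∃ i k, k ≠ β i ∧ γ = Function.update β i k := by
  refine ⟨fun h => ?_, fun ⟨i, k, hk, hγ⟩ => hγ ▸ hammingDist_update_self hk⟩
  obtain ⟨i, hi⟩ := Finset.card_eq_one.1 h
  have hdiff : ∀ j, γ j ≠ β j ↔ j = i := fun j => by
    simpa using Finset.ext_iff.1 hi j
  refine ⟨i, γ i, (hdiff i).2 rfl, funext fun j => ?_⟩
  rcases eq_or_ne j i with rfl | hj
  · simp
  · rw [Function.update_of_ne hj]
    exact not_not.1 (mt (hdiff j).1 hj)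

theorem cell_one_eq_orbit {X : Subgroup (Perm (I → Fin q))} {C : Set (I → Fin q)}
    {c₀ ν₀ : I → Fin q} (hX : X ≤ autH I q) (hC : C = {w | ∃ x ∈ X, x c₀ = w})
    (hC1 : ∀ β ∈ C, ∀ β' ∈ C, hammingDist β β' ≠ 1) (hν₀ : hammingDist ν₀ c₀ = 1)
    (hnbr : ∀ γ, hammingDist γ c₀ = 1 → ∃ x ∈ X, x ν₀ = γ) :
    cell C 1 = {w | ∃ x ∈ X, x ν₀ = w} := by
  ext γ
  rw [mem_cell_one_iff hC1]
  constructor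
  · rintro ⟨_, hβ, hγβ⟩
    obtain ⟨x, hx, rfl⟩ := hC ▸ hβ
    have : hammingDist (x⁻¹ γ) c₀ = 1 := by
      simpa using (hX (inv_mem hx) γ (x c₀)).2 hγβ
    obtain ⟨y, hy, hyν⟩ := hnbr _ this
    exact ⟨x * y, mul_mem hx hy, by simp [hyν]⟩
  · rintro ⟨x, hx, rfl⟩
    exact ⟨x c₀, hC ▸ ⟨x, hx, rfl⟩, (hX hx ν₀ c₀).2 hν₀⟩

/-- `hnbr` says that the stabiliser of `c₀` in `K` maps `update c₀ i₀ k₀` to every neighbour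
`update c₀ i k` of `c₀` (see `diagLHom_update`). -/
theorem diagNbrTransitive_map_diagLHom {K : Subgroup (Perm (Fin q) × Perm I)}
    {C : Set (I → Fin q)} {c₀ : I → Fin q} {i₀ : I} {k₀ : Fin q}
    (hC : C = {w | ∃ x ∈ K.map (diagLHom I q), x c₀ = w})
    (hC1 : ∀ β ∈ C, ∀ β' ∈ C, hammingDist β β' ≠ 1) (hk₀ : k₀ ≠ c₀ i₀)
    (hnbr : ∀ i k, k ≠ c₀ i → ∃ x ∈ K, diagLHom I q x c₀ = c₀ ∧ x.2 i₀ = i ∧ x.1 k₀ = k) :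
    DiagNbrTransitive (K.map (diagLHom I q)) C := by
  have hle : K.map (diagLHom I q) ≤ diagL I q := Subgroup.map_le_range _ _
  have hnbr' : ∀ γ, hammingDist γ c₀ = 1 →
      ∃ x ∈ K.map (diagLHom I q), x (Function.update c₀ i₀ k₀) = γ := by
    intro γ hγ
    obtain ⟨i, k, hk, rfl⟩ := hammingDist_eq_one_iff.1 hγ
    obtain ⟨x, hx, hxc, rfl, rfl⟩ := hnbr i k hk
    exact ⟨_, ⟨x, hx, rfl⟩, by rw [diagLHom_update, hxc]⟩
  exact ⟨⟨hle.trans diagL_le_autH, ⟨c₀, hC⟩, _, cell_one_eq_orbit (hle.trans diagL_le_autH)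
    hC hC1 (hammingDist_update_self hk₀) hnbr'⟩, hle⟩

end Hamming

section Repetition

variable {I : Type*} [Fintype I] {q p : ℕ}

theorem hammingDist_repv (α β : I → Fin q) :
    hammingDist (repv p α) (repv p β) = p * hammingDist α β := by
  have hf : (Finset.univ.filter fun ji : Fin p × I => α ji.2 ≠ β ji.2) =
      (Finset.univ : Finset (Fin p)) ×ˢ Finset.univ.filter fun i => α i ≠ β i := by
    ext; simp
  change (Finset.univ.filter fun ji : Fin p × I => α ji.2 ≠ β ji.2).card = _
  rw [hf, Finset.card_product, Finset.card_univ, Fintype.card_fin, hammingDist]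

def repLift (p : ℕ) (I : Type*) (q : ℕ) :
    (Perm (Fin q) × Perm I) × Perm (Fin p) →* Perm (Fin q) × Perm (Fin p × I) where
  toFun x := (x.1.1, x.2.prodCongr x.1.2)
  map_one' := rfl
  map_mul' _ _ := rfl

theorem diagLHom_repLift_repv [DecidableEq I] (x : (Perm (Fin q) × Perm I) × Perm (Fin p))
    (β : I → Fin q) :
    diagLHom (Fin p × I) q (repLift p I q x) (repv p β) = repv p (diagLHom I q x.1 β) :=
  rfl

theorem diagNbrTransitive_repCodeP [DecidableEq I] {K : Subgroup (Perm (Fin q) × Perm I)}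
    {C : Set (I → Fin q)} {c₀ : I → Fin q} {i₀ : I} {k₀ : Fin q} (j₀ : Fin p)
    (hC : C = {w | ∃ x ∈ K.map (diagLHom I q), x c₀ = w})
    (hC1 : ∀ β ∈ C, ∀ β' ∈ C, hammingDist β β' ≠ 1) (hk₀ : k₀ ≠ c₀ i₀)
    (hnbr : ∀ i k, k ≠ c₀ i → ∃ x ∈ K, diagLHom I q x c₀ = c₀ ∧ x.2 i₀ = i ∧ x.1 k₀ = k) :
    DiagNbrTransitive (((K.prod ⊤).map (repLift p I q)).map (diagLHom (Fin p × I) q))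
      (repCodeP p C) := by
  refine diagNbrTransitive_map_diagLHom (c₀ := repv p c₀) (i₀ := (j₀, i₀)) ?_ ?_ hk₀ ?_
  · ext w
    constructor
    · rintro ⟨β, hβ, rfl⟩
      obtain ⟨_, ⟨x, hx, rfl⟩, rfl⟩ := hC ▸ hβ
      exact ⟨_, ⟨_, ⟨(x, 1), ⟨hx, Subgroup.mem_top _⟩, rfl⟩, rfl⟩, diagLHom_repLift_repv _ _⟩
    · rintro ⟨_, ⟨_, ⟨x, ⟨hx, -⟩, rfl⟩, rfl⟩, rfl⟩
      exact ⟨_, hC ▸ ⟨_, ⟨x.1, hx, rfl⟩, rfl⟩, (diagLHom_repLift_repv x c₀).symm⟩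
  · rintro _ ⟨β, hβ, rfl⟩ _ ⟨β', hβ', rfl⟩ h
    rw [hammingDist_repv] at h
    exact hC1 β hβ β' hβ' (Nat.eq_one_of_mul_eq_one_left h)
  · rintro ⟨j, i⟩ k hk
    obtain ⟨x, hx, hxc, rfl, rfl⟩ := hnbr i k hk
    refine ⟨repLift p I q (x, swap j₀ j), ⟨_, ⟨hx, Subgroup.mem_top _⟩, rfl⟩, ?_, ?_, rfl⟩
    · rw [diagLHom_repLift_repv, hxc]
    · exact Prod.ext (swap_apply_left _ _) rfl

theorem cnt_repv (α : I → Fin q) (a : Fin q) :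
    cnt (repv p α) a = p * cnt α a := by
  have hf : (Finset.univ.filter fun ji : Fin p × I => α ji.2 = a) =
      (Finset.univ : Finset (Fin p)) ×ˢ Finset.univ.filter fun i => α i = a := by
    ext; simp
  change (Finset.univ.filter fun ji : Fin p × I => α ji.2 = a).card = _
  rw [hf, Finset.card_product, Finset.card_univ, Fintype.card_fin, cnt]

end Repetition

section Injective

variable {α β : Type*} [DecidableEq α] {f : α → β} {i : α} {v : β}

theorem Function.Injective.update_eq_of_update_eq (hf : Function.Injective f) {a b : α}
    (hab : a ≠ b) (h : Function.update f i v a = Function.update f i v b) :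
    Function.update f i v a = v := by
  rcases eq_or_ne a i with rfl | ha
  · simp
  rcases eq_or_ne b i with rfl | hb
  · simpa using h
  rw [Function.update_of_ne ha, Function.update_of_ne hb] at h
  exact absurd (hf h) hab

theorem Function.Injective.update_ne_apply (hf : Function.Injective f) (hv : v ≠ f i) (k : α) :
    Function.update f i v k ≠ f i := by
  rcases eq_or_ne k i with rfl | hk
  · simpa using hv
  · rw [Function.update_of_ne hk]
    exact hf.ne hk

end Injective

/-- For finite `G`, the stabiliser of `T` under `(h, σ) • t = h * t * σ⁻¹`. -/
def Subgroup.twoSidedStabilizer {G : Type*} [Group G] (T : Subgroup G) : Subgroup (G × G) where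
  carrier := {x | x.1 ∈ normalizer (T : Set G) ∧ x.1 * x.2⁻¹ ∈ T}
  one_mem' := ⟨one_mem _, by simp [T.one_mem]⟩
  mul_mem' := by
    rintro ⟨h, σ⟩ ⟨h', σ'⟩ ⟨hN, hT⟩ ⟨hN', hT'⟩
    refine ⟨mul_mem hN hN', ?_⟩
    have := mul_mem ((mem_normalizer_iff.1 hN _).1 hT') hT
    simpa [mul_assoc] using this
  inv_mem' := by
    rintro ⟨h, σ⟩ ⟨hN, hT⟩
    refine ⟨inv_mem hN, ?_⟩
    have := (mem_normalizer_iff.1 (inv_mem hN) _).1 (inv_mem hT)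
    simpa [mul_assoc] using this

theorem Subgroup.mem_twoSidedStabilizer_of_forall_mul_mem {G : Type*} [Group G] [Finite G]
    {T : Subgroup G} {h σ : G} (hT : ∀ t ∈ T, h * t * σ⁻¹ ∈ T) :
    (h, σ) ∈ T.twoSidedStabilizer := by
  have hσ : h * σ⁻¹ ∈ T := by simpa using hT 1 T.one_mem
  refine ⟨mem_normalizer_fintype fun t ht => ?_, hσ⟩
  simpa [mul_assoc] using mul_mem (hT t ht) (inv_mem hσ)

def IsTwoTransitive {α : Type*} (S : Subgroup (Perm α)) : Prop :=
  ∀ i₁ i₂ j₁ j₂ : α, i₁ ≠ i₂ → j₁ ≠ j₂ → ∃ y ∈ S, y i₁ = j₁ ∧ y i₂ = j₂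

section PermCode

variable {q : ℕ}

@[simp]
theorem alphaVtx_apply (g : Perm (Fin q)) (i : Fin q) : alphaVtx g i = g i :=
  rfl

theorem alphaVtx_injective : Function.Injective (alphaVtx (q := q)) :=
  fun _ _ h => Equiv.ext (congrFun h)

theorem injective_alphaVtx_apply (g : Perm (Fin q)) : Function.Injective (alphaVtx g) :=
  g.injective

theorem diagLHom_alphaVtx (h σ t : Perm (Fin q)) :
    diagLHom (Fin q) q (h, σ) (alphaVtx t) = alphaVtx (h * t * σ⁻¹) :=
  rfl

theorem hammingDist_alphaVtx_ne_one (s t : Perm (Fin q)) :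
    hammingDist (alphaVtx s) (alphaVtx t) ≠ 1 := by
  intro h
  obtain ⟨i, k, hk, hs⟩ := hammingDist_eq_one_iff.1 h
  have hsi : s i = k := by simpa using congrFun hs i
  have hne : t⁻¹ k ≠ i := fun e => hk (by simp [← e])
  have hst := congrFun hs (t⁻¹ k)
  rw [Function.update_of_ne hne, alphaVtx_apply, alphaVtx_apply, ← Perm.mul_apply t,
    mul_inv_cancel, Perm.one_apply] at hst
  exact hne (s.injective (hst.trans hsi.symm))

theorem hammingDist_permCode_ne_one (T : Set (Perm (Fin q))) :
    ∀ β ∈ permCode T, ∀ β' ∈ permCode T, hammingDist β β' ≠ 1 := by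
  rintro _ ⟨s, -, rfl⟩ _ ⟨t, -, rfl⟩
  exact hammingDist_alphaVtx_ne_one s t

theorem permCode_eq_orbit (T : Subgroup (Perm (Fin q))) :
    permCode (T : Set (Perm (Fin q))) =
      {w | ∃ x ∈ T.twoSidedStabilizer.map (diagLHom (Fin q) q), x (alphaVtx 1) = w} := by
  ext w
  constructor
  · rintro ⟨t, ht, rfl⟩
    exact ⟨_, ⟨(1, t⁻¹), ⟨one_mem _, by simpa using ht⟩, rfl⟩, by simp [diagLHom_alphaVtx]⟩
  · rintro ⟨_, ⟨⟨h, σ⟩, ⟨-, hσ⟩, rfl⟩, rfl⟩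
    exact ⟨h * 1 * σ⁻¹, by simpa using hσ, rfl⟩

theorem exists_mem_twoSidedStabilizer_of_isTwoTransitive {T : Subgroup (Perm (Fin q))}
    (hT : IsTwoTransitive (Subgroup.normalizer (T : Set (Perm (Fin q))))) {i₀ k₀ : Fin q}
    (hk₀ : k₀ ≠ i₀) (i k : Fin q) (hk : k ≠ alphaVtx 1 i) :
    ∃ x ∈ T.twoSidedStabilizer, diagLHom (Fin q) q x (alphaVtx 1) = alphaVtx 1 ∧
      x.2 i₀ = i ∧ x.1 k₀ = k := by
  obtain ⟨y, hy, rfl, rfl⟩ := hT i₀ k₀ i k hk₀.symm (by simpa using hk.symm)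
  exact ⟨(y, y), ⟨hy, by simp [T.one_mem]⟩, by simp [diagLHom_alphaVtx], rfl, rfl⟩

theorem apply_eq_of_diagLHom_update_eq {h σ : Perm (Fin q)} {i₁ i₂ j₁ j₂ : Fin q}
    (hi : i₁ ≠ i₂) (hj : j₁ ≠ j₂)
    (hx : diagLHom (Fin q) q (h, σ) (Function.update (alphaVtx 1) i₂ i₁) =
      Function.update (alphaVtx 1) j₂ j₁) :
    h i₁ = j₁ ∧ h i₂ = j₂ := by
  set ν := Function.update (alphaVtx (1 : Perm (Fin q))) i₂ i₁
  have hν : ∀ k, h (ν (σ⁻¹ k)) = Function.update (alphaVtx 1) j₂ j₁ k := fun k =>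
    congrFun hx k
  have hj₁ := hν j₁
  have hj₂ := hν j₂
  rw [Function.update_of_ne hj, alphaVtx_apply, Perm.one_apply] at hj₁
  rw [Function.update_self] at hj₂
  constructor
  · have hrep : ν (σ⁻¹ j₁) = ν (σ⁻¹ j₂) := h.injective (hj₁.trans hj₂.symm)
    rw [← (injective_alphaVtx_apply 1).update_eq_of_update_eq (by simpa using hj) hrep, hj₁]
  · by_contra hne
    have := hν (h i₂)
    rw [Function.update_of_ne hne, alphaVtx_apply, Perm.one_apply] at this
    exact (injective_alphaVtx_apply 1).update_ne_apply (by simpa using hi) _ (h.injective this)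

theorem cnt_alphaVtx (g : Perm (Fin q)) (a : Fin q) : cnt (alphaVtx g) a = 1 := by
  change (Finset.univ.filter fun i => g i = a).card = 1
  rw [Finset.card_eq_one]
  exact ⟨g⁻¹ a, Finset.ext fun i => by simp [Equiv.eq_symm_apply]⟩

theorem isTwoTransitive_normalizer_of_diagNbrTransitive {T : Subgroup (Perm (Fin q))}
    {X : Subgroup (Perm (Fin q → Fin q))} (hX : DiagNbrTransitive X (permCode (T : Set _))) :
    IsTwoTransitive (Subgroup.normalizer (T : Set (Perm (Fin q)))) := by
  obtain ⟨⟨-, hC, hC1⟩, hXdiag⟩ := hX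
  intro i₁ i₂ j₁ j₂ hi hj
  have hν : ∀ {a b : Fin q}, a ≠ b → Function.update (alphaVtx 1) b a ∈ cell (permCode T) 1 :=
    fun hab => (mem_cell_one_iff (hammingDist_permCode_ne_one _)).2
      ⟨_, ⟨1, T.one_mem, rfl⟩, hammingDist_update_self (by simpa using hab)⟩
  obtain ⟨x, hxX, hx⟩ := hC1.exists_apply_eq (hν hi) (hν hj)
  obtain ⟨⟨h, σ⟩, rfl⟩ := hXdiag hxX
  have hT : ∀ t ∈ T, h * t * σ⁻¹ ∈ T := fun t ht => by
    obtain ⟨t', ht', e⟩ := hC.apply_mem hxX ⟨t, ht, rfl⟩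
    rw [diagLHom_alphaVtx] at e
    exact alphaVtx_injective e ▸ ht'
  exact ⟨h, (Subgroup.mem_twoSidedStabilizer_of_forall_mul_mem hT).1,
    apply_eq_of_diagLHom_update_eq hi hj hx⟩

end PermCode

/-- Theorem 1.3: for a subgroup `T ≤ S_q`, the permutation code `C(T)`
is diagonally neighbour transitive in `H(q,q)` iff `N_{S_q}(T)` is `2`-transitive;
moreover, if `C(T)` is diagonally neighbour transitive then for every positive `p` the
repetition code `Rep_p(C(T))` is a diagonally neighbour transitive frequency permutation
array in `H(pq,q)`. -/
theorem permCode_diag_neighbour_transitive_iff (q p : ℕ) (hq : 2 ≤ q) (hp : 0 < p)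
    (T : Subgroup (Equiv.Perm (Fin q))) :
    ((∃ X : Subgroup (Equiv.Perm (Fin q → Fin q)),
        DiagNbrTransitive X (permCode (T : Set (Equiv.Perm (Fin q))))) ↔
      (∀ i₁ i₂ j₁ j₂ : Fin q, i₁ ≠ i₂ → j₁ ≠ j₂ →
        ∃ y ∈ Subgroup.normalizer (T : Set (Equiv.Perm (Fin q))), y i₁ = j₁ ∧ y i₂ = j₂)) ∧
    ((∃ X : Subgroup (Equiv.Perm (Fin q → Fin q)),
        DiagNbrTransitive X (permCode (T : Set (Equiv.Perm (Fin q))))) →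
      (∃ Y : Subgroup (Equiv.Perm (Fin p × Fin q → Fin q)),
        DiagNbrTransitive Y (repCodeP p (permCode (T : Set (Equiv.Perm (Fin q)))))) ∧
      (∀ β ∈ repCodeP p (permCode (T : Set (Equiv.Perm (Fin q)))), ∀ a : Fin q,
        cnt β a = p)) := by
  obtain ⟨i₀, k₀, hne⟩ := (Fin.nontrivial_iff_two_le.2 hq).exists_pair_ne
  have hstab := fun hT => exists_mem_twoSidedStabilizer_of_isTwoTransitive (T := T) hT hne.symm
  refine ⟨⟨fun ⟨X, hX⟩ => isTwoTransitive_normalizer_of_diagNbrTransitive hX, fun hT => ?_⟩,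
    fun ⟨X, hX⟩ => ⟨?_, ?_⟩⟩
  · exact ⟨_, diagNbrTransitive_map_diagLHom (permCode_eq_orbit T)
      (hammingDist_permCode_ne_one _) hne.symm (hstab hT)⟩
  · exact ⟨_, diagNbrTransitive_repCodeP ⟨0, hp⟩ (permCode_eq_orbit T)
      (hammingDist_permCode_ne_one _) hne.symm
      (hstab (isTwoTransitive_normalizer_of_diagNbrTransitive hX))⟩
  · rintro _ ⟨_, ⟨t, -, rfl⟩, rfl⟩ a
    rw [cnt_repv, cnt_alphaVtx, mul_one]
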